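/- Let n ≥ 2, let λ be a partition of n−2, μ a partition of n−1 and ξ a partition of n, such that the Young diagram of μ is obtained from that of λ by adding one cell and the diagram of ξ is obtained from that of μ by adding one cell. Let c₁ be the content of the cell ξ/μ and c₂ the content of the cell μ/λ (the content of a cell in row i, column j being j − i). Then the endomorphism i_{λμ} ∘ i_{μξ} ∘ ρ_ξ((n−1 n)) ∘ i_{ξμ} ∘ i_{μλ} of W^λ equals (1/(c₁ − c₂)) · id; that is, it equals cos θ · id, where θ ∈ [0,π] is defined by cos θ = 1/(c₁ − c₂). -/

import Mathlib

noncomputable section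

namespace WLE

/-- A filling (bijective labelling of the cells of `μ` by `Fin μ.card`) is *standard* if
its entries increase strictly along rows and columns. -/
def IsStandard (μ : YoungDiagram) (f : {c : ℕ × ℕ // c ∈ μ.cells} ≃ Fin μ.card) : Prop :=
  ∀ c c' : {c : ℕ × ℕ // c ∈ μ.cells},
    ((c.1.1 = c'.1.1 ∧ c.1.2 < c'.1.2) ∨ (c.1.2 = c'.1.2 ∧ c.1.1 < c'.1.1)) →
      f c < f c'

/-- A standard Young tableau of shape `μ`: a bijection from the cells of `μ` to
`Fin μ.card` (0-indexed entries; the paper's entry `k ∈ {1,…,n}` corresponds to the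
value `k − 1 : Fin μ.card`) increasing along rows and columns. -/
def SYT (μ : YoungDiagram) : Type :=
  {f : {c : ℕ × ℕ // c ∈ μ.cells} ≃ Fin μ.card // IsStandard μ f}

instance (μ : YoungDiagram) : Finite (SYT μ) := by
  have : Finite ({c : ℕ × ℕ // c ∈ μ.cells} ≃ Fin μ.card) :=
    Finite.of_injective (fun f => (f : {c : ℕ × ℕ // c ∈ μ.cells} → Fin μ.card))
      fun f g h => Equiv.coe_fn_injective h
  exact Subtype.finite

noncomputable instance (μ : YoungDiagram) : Fintype (SYT μ) := Fintype.ofFinite _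

noncomputable instance (μ : YoungDiagram) : DecidableEq (SYT μ) := Classical.decEq _

/-- `content T k` is the content `j − i` of the cell (row `i`, column `j`, 0-indexed)
of `T` containing the entry `k`. -/
def content {μ : YoungDiagram} (T : SYT μ) (k : Fin μ.card) : ℤ :=
  ((T.1.symm k).1.2 : ℤ) - ((T.1.symm k).1.1 : ℤ)

/-- The index `k − 1` (in `Fin μ.card`), used to form the adjacent transposition
`(k−1 k)`. -/
def kpred {μ : YoungDiagram} (k : Fin μ.card) : Fin μ.card :=
  ⟨k.val - 1, lt_of_le_of_lt (Nat.sub_le _ _) k.isLt⟩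

/-- The filling obtained from `T` by exchanging the entries `k−1` and `k`. -/
def swapped {μ : YoungDiagram} (k : Fin μ.card) (T : SYT μ) :
    {c : ℕ × ℕ // c ∈ μ.cells} ≃ Fin μ.card :=
  T.1.trans (Equiv.swap (kpred k) k)

/-- The (real) axial distance `d = c_T(k) − c_T(k−1)`. -/
def dval {μ : YoungDiagram} (k : Fin μ.card) (T : SYT μ) : ℝ :=
  ((content T k - content T (kpred k) : ℤ) : ℝ)

noncomputable instance (μ : YoungDiagram) : DecidablePred (IsStandard μ) :=
  fun _ => Classical.propDecidable _

/-- The Young orthogonal form operator `s_k` on `W^μ = EuclideanSpace ℝ (SYT μ)`: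
`s_k e_T = (1/d) e_T + √(1 − 1/d²) e_{(k−1 k)T}`, with `d = c_T(k) − c_T(k−1)` and
`e_{(k−1 k)T} = 0` when the swapped filling is not standard. -/
def youngOp (μ : YoungDiagram) (k : Fin μ.card) :
    EuclideanSpace ℝ (SYT μ) →ₗ[ℝ] EuclideanSpace ℝ (SYT μ) where
  toFun x := WithLp.toLp 2 fun T => (dval k T)⁻¹ * x T +
    Real.sqrt (1 - ((dval k T)⁻¹) ^ 2) *
      (if h : IsStandard μ (swapped k T) then x ⟨swapped k T, h⟩ else 0)
  map_add' x y := by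
    ext T
    by_cases h : IsStandard μ (swapped k T) <;>
      simp [h, PiLp.add_apply] <;>
      first | (rw [show x.ofLp + y.ofLp = fun S => x.ofLp S + y.ofLp S from rfl]; ring) | ring
  map_smul' c x := by
    ext T
    by_cases h : IsStandard μ (swapped k T) <;>
      simp [h, PiLp.smul_apply, smul_eq_mul] <;>
      first | (rw [show c • x.ofLp = fun S => c * x.ofLp S from rfl]; ring) | ring

end WLE

/-!
Both extensions place the entries `n − 1` and `n` in the cells `μ/λ` and `ξ/μ`, so on a
tableau `S(S(T, μ), ξ)` the operator `s_n` has diagonal coefficient `1/(c₁ − c₂)` and its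
off-diagonal term points to the tableau with `n − 1` and `n` exchanged. That tableau has `n` in
the cell `μ/λ`, so it is not of the form `S(S(T', μ), ξ)` and the adjoints annihilate it.
-/

namespace WLE

open scoped RealInnerProductSpace

theorem adjoint_apply_eq_of_map_single {𝕜 ι κ : Type*} [RCLike 𝕜] [Fintype ι] [DecidableEq ι]
    [Fintype κ] [DecidableEq κ] {e : ι → κ} {i : EuclideanSpace 𝕜 ι →ₗ[𝕜] EuclideanSpace 𝕜 κ}
    (hi : ∀ a, i (EuclideanSpace.single a 1) = EuclideanSpace.single (e a) 1)
    {j : EuclideanSpace 𝕜 κ →ₗ[𝕜] EuclideanSpace 𝕜 ι}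
    (hj : ∀ x y, inner 𝕜 (j x) y = inner 𝕜 x (i y)) (x : EuclideanSpace 𝕜 κ) (a : ι) :
    j x a = x (e a) := by
  refine (starRingEnd 𝕜).injective ?_
  simpa [hi, EuclideanSpace.inner_single_right] using hj x (EuclideanSpace.single a 1)

def Extends {lam mu : YoungDiagram} (hsub : lam.cells ⊆ mu.cells) (T : SYT lam) (U : SYT mu) :
    Prop :=
  ∀ (c : ℕ × ℕ) (hc : c ∈ lam.cells),
    (((U.1 ⟨c, hsub hc⟩ : Fin mu.card) : ℕ) = ((T.1 ⟨c, hc⟩ : Fin lam.card) : ℕ))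

namespace Extends

variable {lam mu : YoungDiagram} {hsub : lam.cells ⊆ mu.cells} {T : SYT lam} {U : SYT mu}

theorem injective {ext : SYT lam → SYT mu} (h : ∀ T, Extends hsub T (ext T)) :
    Function.Injective ext := fun T T' hTT' =>
  Subtype.ext <| Equiv.ext fun c => Fin.ext <| (h T c.1 c.2).symm.trans (hTT' ▸ h T' c.1 c.2)

theorem val_apply_of_not_mem (h : Extends hsub T U) (hcard : mu.card = lam.card + 1)
    {c : ℕ × ℕ} (hc : c ∈ mu.cells) (hcl : c ∉ lam.cells) :
    ((U.1 ⟨c, hc⟩ : Fin mu.card) : ℕ) = lam.card := by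
  set d := U.1.symm ⟨lam.card, by omega⟩
  -- the cells of `lam` carry the entries `< lam.card`, so `lam.card` sits in the new cell
  have hdl : d.1 ∉ lam.cells := fun hd => by
    have := h d.1 hd
    simp only [Subtype.coe_eta, d, Equiv.apply_symm_apply] at this
    exact absurd this (T.1 ⟨d.1, hd⟩).isLt.ne'
  have hnew : (mu.cells \ lam.cells).card ≤ 1 := by
    rw [Finset.card_sdiff_of_subset hsub]
    exact Nat.sub_le_iff_le_add'.mpr hcard.le
  have hcd : c = d.1 := Finset.card_le_one.mp hnew _ (Finset.mem_sdiff.mpr ⟨hc, hcl⟩) _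
    (Finset.mem_sdiff.mpr ⟨d.2, hdl⟩)
  simp only [hcd, Subtype.coe_eta, d, Equiv.apply_symm_apply]

end Extends

theorem dval_eq_of_apply_eq {μ : YoungDiagram} (T : SYT μ) (k : Fin μ.card) {c c' : ℕ × ℕ}
    (hc : c ∈ μ.cells) (hc' : c' ∈ μ.cells) (hk : T.1 ⟨c, hc⟩ = k)
    (hk' : T.1 ⟨c', hc'⟩ = kpred k) :
    dval k T = ((((c.2 : ℤ) - (c.1 : ℤ)) - ((c'.2 : ℤ) - (c'.1 : ℤ)) : ℤ) : ℝ) := by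
  rw [dval, content, content, ← hk', ← hk, Equiv.symm_apply_apply, Equiv.symm_apply_apply]

theorem swapped_ne_of_apply_eq_kpred {μ : YoungDiagram} {k : Fin μ.card} (hk : 1 ≤ k.val)
    {T T' : SYT μ} {c : ℕ × ℕ} (hc : c ∈ μ.cells) (hT : T.1 ⟨c, hc⟩ = kpred k)
    (hT' : T'.1 ⟨c, hc⟩ = kpred k) : swapped k T ≠ T'.1 := by
  intro h
  have hck := congrArg (· ⟨c, hc⟩) h
  simp only [swapped, Equiv.trans_apply, hT, hT', Equiv.swap_apply_left] at hck
  have := congrArg Fin.val hck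
  simp only [kpred] at this
  omega

theorem youngOp_single_apply_of_swapped_ne {μ : YoungDiagram} (k : Fin μ.card) {U V : SYT μ}
    (h : swapped k U ≠ V.1) :
    youngOp μ k (EuclideanSpace.single V 1) U =
      (dval k U)⁻¹ * EuclideanSpace.single V (1 : ℝ) U := by
  have hoff (hstd : IsStandard μ (swapped k U)) :
      EuclideanSpace.single V (1 : ℝ) (⟨swapped k U, hstd⟩ : SYT μ) = 0 :=
    (PiLp.single_apply _ _ _ _ _).trans (if_neg fun hV => h (congrArg Subtype.val hV))
  simp only [youngOp, LinearMap.coe_mk, AddHom.coe_mk, hoff, dite_eq_ite, ite_self, mul_zero,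
    add_zero]

/-- Let `n ≥ 2`, let `λ ⊂ μ ⊂ ξ` be partitions of `n−2`, `n−1`, `n`
respectively, each obtained from the previous by adding one cell.  Let `c₁` be the
content of the cell `ξ/μ` and `c₂` the content of the cell `μ/λ`.  With the
box-adding maps `i_{μλ} : W^λ → W^μ` and `i_{ξμ} : W^μ → W^ξ`, their adjoints
`i_{λμ}, i_{μξ}`, and the Young orthogonal form representation `ρ_ξ`, the
endomorphism `i_{λμ} ∘ i_{μξ} ∘ ρ_ξ((n−1 n)) ∘ i_{ξμ} ∘ i_{μλ}` of `W^λ` equals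
`(1/(c₁−c₂)) · id = cos θ · id`, where `cos θ = 1/(c₁−c₂)`, `θ ∈ [0,π]`. -/
theorem composite_eq_cos_smul_id (lam mu xi : YoungDiagram) (hn : 2 ≤ xi.card)
    (hsub1 : lam.cells ⊆ mu.cells) (hcard1 : mu.card = lam.card + 1)
    (hsub2 : mu.cells ⊆ xi.cells) (hcard2 : xi.card = mu.card + 1)
    (cell1 : ℕ × ℕ) (hcell1 : cell1 ∈ xi.cells ∧ cell1 ∉ mu.cells)
    (cell2 : ℕ × ℕ) (hcell2 : cell2 ∈ mu.cells ∧ cell2 ∉ lam.cells)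
    (ext1 : SYT lam → SYT mu)
    (hext1 : ∀ (T : SYT lam) (c : ℕ × ℕ) (hc : c ∈ lam.cells),
      (((ext1 T).1 ⟨c, hsub1 hc⟩ : Fin mu.card) : ℕ) = ((T.1 ⟨c, hc⟩ : Fin lam.card) : ℕ))
    (ext2 : SYT mu → SYT xi)
    (hext2 : ∀ (T : SYT mu) (c : ℕ × ℕ) (hc : c ∈ mu.cells),
      (((ext2 T).1 ⟨c, hsub2 hc⟩ : Fin xi.card) : ℕ) = ((T.1 ⟨c, hc⟩ : Fin mu.card) : ℕ))
    (i1 : EuclideanSpace ℝ (SYT lam) →ₗ[ℝ] EuclideanSpace ℝ (SYT mu))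
    (hi1 : ∀ T : SYT lam,
      i1 (EuclideanSpace.single T (1 : ℝ)) = EuclideanSpace.single (ext1 T) (1 : ℝ))
    (i2 : EuclideanSpace ℝ (SYT mu) →ₗ[ℝ] EuclideanSpace ℝ (SYT xi))
    (hi2 : ∀ T : SYT mu,
      i2 (EuclideanSpace.single T (1 : ℝ)) = EuclideanSpace.single (ext2 T) (1 : ℝ))
    (iadj1 : EuclideanSpace ℝ (SYT mu) →ₗ[ℝ] EuclideanSpace ℝ (SYT lam))
    (hadj1 : ∀ (x : EuclideanSpace ℝ (SYT mu)) (y : EuclideanSpace ℝ (SYT lam)),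
      ⟪iadj1 x, y⟫ = ⟪x, i1 y⟫)
    (iadj2 : EuclideanSpace ℝ (SYT xi) →ₗ[ℝ] EuclideanSpace ℝ (SYT mu))
    (hadj2 : ∀ (x : EuclideanSpace ℝ (SYT xi)) (y : EuclideanSpace ℝ (SYT mu)),
      ⟪iadj2 x, y⟫ = ⟪x, i2 y⟫)
    (ρxi : Equiv.Perm (Fin xi.card) →* (Module.End ℝ (EuclideanSpace ℝ (SYT xi)))ˣ)
    (hρxi : ∀ k : Fin xi.card, 1 ≤ k.val →
      ((ρxi (Equiv.swap (kpred k) k) : Module.End ℝ (EuclideanSpace ℝ (SYT xi)))) =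
        youngOp xi k) :
    iadj1 ∘ₗ iadj2 ∘ₗ
        ((ρxi (Equiv.swap (kpred (⟨xi.card - 1, by omega⟩ : Fin xi.card))
            (⟨xi.card - 1, by omega⟩ : Fin xi.card)) :
          Module.End ℝ (EuclideanSpace ℝ (SYT xi)))) ∘ₗ i2 ∘ₗ i1 =
      ((((cell1.2 : ℤ) - (cell1.1 : ℤ)) - ((cell2.2 : ℤ) - (cell2.1 : ℤ)) : ℤ) : ℝ)⁻¹ •
        (LinearMap.id : EuclideanSpace ℝ (SYT lam) →ₗ[ℝ] EuclideanSpace ℝ (SYT lam)) := by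
  set k : Fin xi.card := ⟨xi.card - 1, by omega⟩
  have hk : 1 ≤ k.val := by simp only [k]; omega
  have hcell1_eq : ∀ T, (ext2 (ext1 T)).1 ⟨cell1, hcell1.1⟩ = k := fun T => Fin.ext <| by
    rw [Extends.val_apply_of_not_mem (hext2 (ext1 T)) hcard2 hcell1.1 hcell1.2]
    simp only [k]; omega
  have hcell2_eq : ∀ T, (ext2 (ext1 T)).1 ⟨cell2, hsub2 hcell2.1⟩ = kpred k := fun T =>
    Fin.ext <| by
      rw [hext2 _ _ hcell2.1, Extends.val_apply_of_not_mem (hext1 T) hcard1 hcell2.1 hcell2.2]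
      simp only [kpred, k]; omega
  refine (PiLp.basisFun 2 ℝ (SYT lam)).ext fun T => ?_
  ext T'
  simp only [PiLp.basisFun_apply, LinearMap.comp_apply, LinearMap.smul_apply, LinearMap.id_apply,
    hi1, hi2, hρxi k hk, adjoint_apply_eq_of_map_single hi1 hadj1,
    adjoint_apply_eq_of_map_single hi2 hadj2,
    youngOp_single_apply_of_swapped_ne k
      (swapped_ne_of_apply_eq_kpred hk _ (hcell2_eq T') (hcell2_eq T)),
    dval_eq_of_apply_eq _ k _ _ (hcell1_eq T') (hcell2_eq T'), PiLp.smul_apply,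
    PiLp.single_apply, smul_eq_mul, (Extends.injective hext2).eq_iff,
    (Extends.injective hext1).eq_iff]
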